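/- Suppose (X'_n, d'_n) is a nonempty compact subspace of a compact metric space (X_n, d_n) for each n, f_n is a bounded function on X_n, and f'_n is its restriction to X'_n. If (X_n, d_n, f_n) → (X, d, f) and (X'_n, d'_n, f'_n) → (X', d', f') in the Gromov–Hausdorff-function topology, and f is continuous, then there is an isometric embedding ψ of (X', d') into (X, d) such that f' = f ∘ ψ. -/

import Mathlib

open Metric Set Filter Topology

/-- The function distance `d_∞` between pairs `(K, f)` of compact subsets of a common metric
space `W` equipped with `Y`-valued functions. -/
noncomputable def dInfty {W Y : Type*} [MetricSpace W] [MetricSpace Y]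
    (K₁ K₂ : Set W) (f₁ f₂ : W → Y) : ℝ :=
  sInf { δ : ℝ | 0 < δ ∧
    (∀ x ∈ K₁, ∃ x' ∈ K₂, dist x x' ≤ δ ∧ dist (f₁ x) (f₂ x') ≤ δ) ∧
    (∀ x ∈ K₂, ∃ x' ∈ K₁, dist x x' ≤ δ ∧ dist (f₂ x) (f₁ x') ≤ δ) }

/-- A coupling witnessing the value `r` in the Gromov–Hausdorff-function distance. -/
def IsGHfCoupling {Y : Type*} [MetricSpace Y] {X₁ X₂ W : Type*}
    (m₁ : MetricSpace X₁) (m₂ : MetricSpace X₂) (mW : MetricSpace W)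
    (K₁ : Set X₁) (f₁ : X₁ → Y) (K₂ : Set X₂) (f₂ : X₂ → Y)
    (ψ₁ : X₁ → W) (ψ₂ : X₂ → W) (g₁ g₂ : W → Y) (r : ℝ) : Prop := by
  letI := m₁; letI := m₂; letI := mW
  exact Isometry ψ₁ ∧ Isometry ψ₂ ∧
    (∀ x ∈ K₁, g₁ (ψ₁ x) = f₁ x) ∧ (∀ x ∈ K₂, g₂ (ψ₂ x) = f₂ x) ∧
    r = hausdorffDist (range ψ₁) (range ψ₂) + dInfty (ψ₁ '' K₁) (ψ₂ '' K₂) g₁ g₂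

/-- The Gromov–Hausdorff-function distance. -/
noncomputable def dGHf {Y : Type*} [MetricSpace Y]
    (X₁ : Type) [m₁ : MetricSpace X₁] (K₁ : Set X₁) (f₁ : X₁ → Y)
    (X₂ : Type) [m₂ : MetricSpace X₂] (K₂ : Set X₂) (f₂ : X₂ → Y) : ℝ :=
  sInf { r : ℝ | ∃ (W : Type) (mW : MetricSpace W) (ψ₁ : X₁ → W) (ψ₂ : X₂ → W)
    (g₁ g₂ : W → Y), IsGHfCoupling m₁ m₂ mW K₁ f₁ K₂ f₂ ψ₁ ψ₂ g₁ g₂ r }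

open Bornology

lemma isGHfCoupling_iff {Y : Type*} [MetricSpace Y] {X₁ X₂ W : Type*}
    [m₁ : MetricSpace X₁] [m₂ : MetricSpace X₂] [mW : MetricSpace W]
    (K₁ : Set X₁) (f₁ : X₁ → Y) (K₂ : Set X₂) (f₂ : X₂ → Y)
    (ψ₁ : X₁ → W) (ψ₂ : X₂ → W) (g₁ g₂ : W → Y) (r : ℝ) :
    IsGHfCoupling m₁ m₂ mW K₁ f₁ K₂ f₂ ψ₁ ψ₂ g₁ g₂ r ↔
      (Isometry ψ₁ ∧ Isometry ψ₂ ∧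
      (∀ x ∈ K₁, g₁ (ψ₁ x) = f₁ x) ∧ (∀ x ∈ K₂, g₂ (ψ₂ x) = f₂ x) ∧
      r = hausdorffDist (range ψ₁) (range ψ₂) + dInfty (ψ₁ '' K₁) (ψ₂ '' K₂) g₁ g₂) :=
  Iff.rfl

lemma dInfty_nonneg {W Y : Type*} [MetricSpace W] [MetricSpace Y]
    (K₁ K₂ : Set W) (f₁ f₂ : W → Y) : 0 ≤ dInfty K₁ K₂ f₁ f₂ :=
  Real.sInf_nonneg fun _ h => h.1.le

lemma couplings_nonempty {Y : Type*} [MetricSpace Y]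
    (X₁ : Type) [m₁ : MetricSpace X₁] (X₂ : Type) [m₂ : MetricSpace X₂]
    (K₁ : Set X₁) (f₁ : X₁ → Y) (K₂ : Set X₂) (f₂ : X₂ → Y) :
    { r : ℝ | ∃ (W : Type) (mW : MetricSpace W) (ψ₁ : X₁ → W) (ψ₂ : X₂ → W)
      (g₁ g₂ : W → Y), IsGHfCoupling m₁ m₂ mW K₁ f₁ K₂ f₂ ψ₁ ψ₂ g₁ g₂ r }.Nonempty := by
  letI : MetricSpace (X₁ ⊕ X₂) := Metric.metricSpaceSum
  refine ⟨hausdorffDist (range (Sum.inl : X₁ → X₁ ⊕ X₂)) (range (Sum.inr : X₂ → X₁ ⊕ X₂)) +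
      dInfty ((Sum.inl : X₁ → X₁ ⊕ X₂) '' K₁) ((Sum.inr : X₂ → X₁ ⊕ X₂) '' K₂)
        (Sum.elim f₁ f₂) (Sum.elim f₁ f₂),
    X₁ ⊕ X₂, Metric.metricSpaceSum, Sum.inl, Sum.inr,
    Sum.elim f₁ f₂, Sum.elim f₁ f₂, ?_⟩
  rw [isGHfCoupling_iff]
  exact ⟨Metric.isometry_inl, Metric.isometry_inr,
    fun x _ => rfl, fun x _ => rfl, rfl⟩

lemma dGHf_nonneg {Y : Type*} [MetricSpace Y]
    (X₁ : Type) [m₁ : MetricSpace X₁] (K₁ : Set X₁) (f₁ : X₁ → Y)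
    (X₂ : Type) [m₂ : MetricSpace X₂] (K₂ : Set X₂) (f₂ : X₂ → Y) :
    0 ≤ dGHf X₁ K₁ f₁ X₂ K₂ f₂ := by
  refine Real.sInf_nonneg fun r hr => ?_
  obtain ⟨W, mW, ψ₁, ψ₂, g₁, g₂, hc⟩ := hr
  letI := mW
  obtain ⟨-, -, -, -, hr⟩ := (isGHfCoupling_iff K₁ f₁ K₂ f₂ ψ₁ ψ₂ g₁ g₂ r).mp hc
  rw [hr]
  exact add_nonneg hausdorffDist_nonneg (dInfty_nonneg _ _ _ _)

/-- From a GHf distance bound, extract approximate isometries in both directions that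
approximately respect the functions. -/
lemma exists_approx_maps {Y : Type*} [MetricSpace Y]
    (X₁ : Type) [MetricSpace X₁] [CompactSpace X₁] [Nonempty X₁]
    (X₂ : Type) [MetricSpace X₂] [CompactSpace X₂] [Nonempty X₂]
    (f₁ : X₁ → Y) (f₂ : X₂ → Y)
    (hb₁ : IsBounded (range f₁)) (hb₂ : IsBounded (range f₂))
    {ε : ℝ} (h : dGHf X₁ univ f₁ X₂ univ f₂ < ε) :
    ∃ (Φ : X₁ → X₂) (Φ' : X₂ → X₁),
      (∀ a b : X₁, |dist (Φ a) (Φ b) - dist a b| ≤ 2 * ε) ∧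
      (∀ a : X₁, dist (f₁ a) (f₂ (Φ a)) ≤ ε) ∧
      (∀ a b : X₂, |dist (Φ' a) (Φ' b) - dist a b| ≤ 2 * ε) ∧
      (∀ a : X₂, dist (f₂ a) (f₁ (Φ' a)) ≤ ε) := by
  obtain ⟨r, hrmem, hrε⟩ :=
    exists_lt_of_csInf_lt (couplings_nonempty X₁ X₂ univ f₁ univ f₂) h
  obtain ⟨W, mW, ψ₁, ψ₂, g₁, g₂, hc⟩ := hrmem
  letI := mW
  obtain ⟨hi₁, hi₂, hg₁, hg₂, hr⟩ :=
    (isGHfCoupling_iff univ f₁ univ f₂ ψ₁ ψ₂ g₁ g₂ r).mp hc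
  have hd : dInfty (ψ₁ '' univ) (ψ₂ '' univ) g₁ g₂ < ε := by
    have h0 : 0 ≤ hausdorffDist (range ψ₁) (range ψ₂) := hausdorffDist_nonneg
    have := dInfty_nonneg (ψ₁ '' univ) (ψ₂ '' univ) g₁ g₂
    linarith
  -- the δ-set is nonempty
  have hA : IsBounded (range ψ₁) := (isCompact_range hi₁.continuous).isBounded
  have hB : IsBounded (range ψ₂) := (isCompact_range hi₂.continuous).isBounded
  obtain ⟨Cs, hCs⟩ := Metric.isBounded_iff.mp (hA.union hB)
  obtain ⟨Cf, hCf⟩ := Metric.isBounded_iff.mp (hb₁.union hb₂)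
  set δ₀ : ℝ := |Cs| + |Cf| + 1 with hδ₀
  have hδ₀pos : 0 < δ₀ := by positivity
  have hDne : { δ : ℝ | 0 < δ ∧
      (∀ x ∈ ψ₁ '' univ, ∃ x' ∈ ψ₂ '' univ, dist x x' ≤ δ ∧ dist (g₁ x) (g₂ x') ≤ δ) ∧
      (∀ x ∈ ψ₂ '' univ, ∃ x' ∈ ψ₁ '' univ, dist x x' ≤ δ ∧ dist (g₂ x) (g₁ x') ≤ δ) }.Nonempty := by
    refine ⟨δ₀, hδ₀pos, ?_, ?_⟩
    · rintro w ⟨x, -, rfl⟩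
      obtain ⟨z⟩ := ‹Nonempty X₂›
      refine ⟨ψ₂ z, mem_image_of_mem _ (mem_univ z), ?_, ?_⟩
      · have := hCs (mem_union_left _ (mem_range_self x))
          (mem_union_right _ (mem_range_self z))
        calc dist (ψ₁ x) (ψ₂ z) ≤ Cs := this
        _ ≤ δ₀ := by rw [hδ₀]; have := le_abs_self Cs; have := abs_nonneg Cf; linarith
      · rw [hg₁ x (mem_univ x), hg₂ z (mem_univ z)]
        have := hCf (mem_union_left _ (mem_range_self x))
          (mem_union_right _ (mem_range_self z))
        calc dist (f₁ x) (f₂ z) ≤ Cf := this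
        _ ≤ δ₀ := by rw [hδ₀]; have := le_abs_self Cf; have := abs_nonneg Cs; linarith
    · rintro w ⟨z, -, rfl⟩
      obtain ⟨x⟩ := ‹Nonempty X₁›
      refine ⟨ψ₁ x, mem_image_of_mem _ (mem_univ x), ?_, ?_⟩
      · have := hCs (mem_union_right _ (mem_range_self z))
          (mem_union_left _ (mem_range_self x))
        calc dist (ψ₂ z) (ψ₁ x) ≤ Cs := this
        _ ≤ δ₀ := by rw [hδ₀]; have := le_abs_self Cs; have := abs_nonneg Cf; linarith
      · rw [hg₁ x (mem_univ x), hg₂ z (mem_univ z)]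
        have := hCf (mem_union_right _ (mem_range_self z))
          (mem_union_left _ (mem_range_self x))
        calc dist (f₂ z) (f₁ x) ≤ Cf := this
        _ ≤ δ₀ := by rw [hδ₀]; have := le_abs_self Cf; have := abs_nonneg Cs; linarith
  obtain ⟨δ, hδmem, hδε⟩ := exists_lt_of_csInf_lt hDne hd
  obtain ⟨hδpos, hfor1, hfor2⟩ := hδmem
  have key1 : ∀ a : X₁, ∃ z : X₂, dist (ψ₁ a) (ψ₂ z) ≤ δ ∧ dist (f₁ a) (f₂ z) ≤ δ := by
    intro a
    obtain ⟨w', hw', hd1, hd2⟩ := hfor1 (ψ₁ a) (mem_image_of_mem _ (mem_univ a))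
    obtain ⟨z, -, rfl⟩ := hw'
    exact ⟨z, hd1, by rwa [hg₁ a (mem_univ a), hg₂ z (mem_univ z)] at hd2⟩
  have key2 : ∀ z : X₂, ∃ a : X₁, dist (ψ₂ z) (ψ₁ a) ≤ δ ∧ dist (f₂ z) (f₁ a) ≤ δ := by
    intro z
    obtain ⟨w', hw', hd1, hd2⟩ := hfor2 (ψ₂ z) (mem_image_of_mem _ (mem_univ z))
    obtain ⟨a, -, rfl⟩ := hw'
    exact ⟨a, hd1, by rwa [hg₁ a (mem_univ a), hg₂ z (mem_univ z)] at hd2⟩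
  choose Φ hΦd hΦf using key1
  choose Φ' hΦ'd hΦ'f using key2
  refine ⟨Φ, Φ', fun a b => ?_, fun a => (hΦf a).trans hδε.le,
    fun a b => ?_, fun a => (hΦ'f a).trans hδε.le⟩
  · have t1 : dist (dist (ψ₂ (Φ a)) (ψ₂ (Φ b))) (dist (ψ₁ a) (ψ₁ b))
        ≤ dist (ψ₂ (Φ a)) (ψ₁ a) + dist (ψ₂ (Φ b)) (ψ₁ b) := dist_dist_dist_le _ _ _ _
    rw [hi₂.dist_eq, hi₁.dist_eq, Real.dist_eq] at t1
    have c1 : dist (ψ₂ (Φ a)) (ψ₁ a) ≤ δ := by rw [dist_comm]; exact hΦd a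
    have c2 : dist (ψ₂ (Φ b)) (ψ₁ b) ≤ δ := by rw [dist_comm]; exact hΦd b
    linarith
  · have t1 : dist (dist (ψ₁ (Φ' a)) (ψ₁ (Φ' b))) (dist (ψ₂ a) (ψ₂ b))
        ≤ dist (ψ₁ (Φ' a)) (ψ₂ a) + dist (ψ₁ (Φ' b)) (ψ₂ b) := dist_dist_dist_le _ _ _ _
    rw [hi₂.dist_eq, hi₁.dist_eq, Real.dist_eq] at t1
    have c1 : dist (ψ₁ (Φ' a)) (ψ₂ a) ≤ δ := by rw [dist_comm]; exact (hΦ'd a)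
    have c2 : dist (ψ₁ (Φ' b)) (ψ₂ b) ≤ δ := by rw [dist_comm]; exact (hΦ'd b)
    linarith

/-- If `(X'_n, d'_n)` is a nonempty compact subspace of `(X_n, d_n)` and `f'_n` is the
restriction of the bounded function `f_n` to `X'_n`, and if `(X_n, d_n, f_n) → (X, d, f)` and
`(X'_n, d'_n, f'_n) → (X', d', f')` in the GHf topology with `f` continuous, then there is an
isometric embedding `ψ : X' → X` with `f' = f ∘ ψ`. -/
theorem stmt18 {Y : Type*} [MetricSpace Y] [ProperSpace Y]
    (X : ℕ → Type) [∀ n, MetricSpace (X n)] [∀ n, CompactSpace (X n)] [∀ n, Nonempty (X n)]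
    (S : ∀ n, Set (X n)) (hSne : ∀ n, (S n).Nonempty) (hSc : ∀ n, IsCompact (S n))
    (f : ∀ n, X n → Y) (hfb : ∀ n, Bornology.IsBounded (Set.range (f n)))
    (Z : Type) [MetricSpace Z] [CompactSpace Z] [Nonempty Z] (F : Z → Y) (hF : Continuous F)
    (Z' : Type) [MetricSpace Z'] [CompactSpace Z'] [Nonempty Z'] (F' : Z' → Y)
    (hF'b : Bornology.IsBounded (Set.range F'))
    (h1 : Tendsto (fun n => dGHf (X n) Set.univ (f n) Z Set.univ F) atTop (𝓝 (0:ℝ)))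
    (h2 : Tendsto (fun n => dGHf (↥(S n)) Set.univ (fun x => f n x.1) Z' Set.univ F')
      atTop (𝓝 (0:ℝ))) :
    ∃ ψ : Z' → Z, Isometry ψ ∧ F' = F ∘ ψ := by
  classical
  set u : ℕ → ℝ := fun n => dGHf (X n) Set.univ (f n) Z Set.univ F with hu
  set v : ℕ → ℝ := fun n => dGHf (↥(S n)) Set.univ (fun x => f n x.1) Z' Set.univ F' with hv
  have hFb : IsBounded (range F) := (isCompact_range hF).isBounded
  have hfb' : ∀ n, IsBounded (range (fun x : ↥(S n) => f n x.1)) := by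
    intro n
    refine (hfb n).subset ?_
    rintro _ ⟨x, rfl⟩; exact mem_range_self _
  have maps1 : ∀ n : ℕ, ∃ Φ : X n → Z,
      (∀ a b, |dist (Φ a) (Φ b) - dist a b| ≤ 2 * (u n + 1 / (n + 1))) ∧
      (∀ a, dist (f n a) (F (Φ a)) ≤ u n + 1 / (n + 1)) := by
    intro n
    have hlt : u n < u n + 1 / ((n : ℝ) + 1) :=
      lt_add_of_pos_right _ (by positivity)
    obtain ⟨Φ, Φ', hΦd, hΦf, -, -⟩ :=
      exists_approx_maps (X n) Z (f n) F (hfb n) hFb hlt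
    exact ⟨Φ, hΦd, hΦf⟩
  have maps2 : ∀ n : ℕ, ∃ Φ : Z' → ↥(S n),
      (∀ a b, |dist (Φ a) (Φ b) - dist a b| ≤ 2 * (v n + 1 / (n + 1))) ∧
      (∀ a, dist (F' a) (f n (Φ a).1) ≤ v n + 1 / (n + 1)) := by
    intro n
    haveI : CompactSpace ↥(S n) := isCompact_iff_compactSpace.mp (hSc n)
    haveI : Nonempty ↥(S n) := (hSne n).to_subtype
    have hlt : v n < v n + 1 / ((n : ℝ) + 1) :=
      lt_add_of_pos_right _ (by positivity)
    obtain ⟨-, Φ', -, -, hΦ'd, hΦ'f⟩ :=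
      exists_approx_maps (↥(S n)) Z' (fun x => f n x.1) F' (hfb' n) hF'b hlt
    exact ⟨Φ', hΦ'd, hΦ'f⟩
  choose Φ1 hd1 hf1 using maps1
  choose Φ2 hd2 hf2 using maps2
  set Ψ : ℕ → Z' → Z := fun n a => Φ1 n ((Φ2 n a).1) with hΨdef
  set E : ℕ → ℝ := fun n => 2 * (u n + 1 / (n + 1)) + 2 * (v n + 1 / (n + 1)) with hE
  have hu0 : ∀ n, 0 ≤ u n := fun n => dGHf_nonneg _ _ _ _ _ _
  have hv0 : ∀ n, 0 ≤ v n := fun n => dGHf_nonneg _ _ _ _ _ _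
  have hΨd : ∀ n a b, |dist (Ψ n a) (Ψ n b) - dist a b| ≤ E n := by
    intro n a b
    have t1 := hd1 n ((Φ2 n a).1) ((Φ2 n b).1)
    have t2 := hd2 n a b
    have hsub : dist ((Φ2 n a).1) ((Φ2 n b).1) = dist (Φ2 n a) (Φ2 n b) :=
      (Subtype.dist_eq _ _).symm
    rw [hsub] at t1
    have := abs_sub_le (dist (Ψ n a) (Ψ n b)) (dist (Φ2 n a) (Φ2 n b)) (dist a b)
    simp only [hΨdef, hE] at *
    have h1' := abs_sub_abs_le_abs_sub (dist (Φ1 n (Φ2 n a).1) (Φ1 n (Φ2 n b).1)) 0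
    linarith [abs_le.mp t1, abs_le.mp t2, abs_le.mp this,
      abs_sub_le (dist (Φ1 n ((Φ2 n a).1)) (Φ1 n ((Φ2 n b).1)))
        (dist (Φ2 n a) (Φ2 n b)) (dist a b)]
  have hΨf : ∀ n a, dist (F' a) (F (Ψ n a)) ≤ E n := by
    intro n a
    have t1 := hf2 n a
    have t2 := hf1 n ((Φ2 n a).1)
    have tri := dist_triangle (F' a) (f n ((Φ2 n a).1)) (F (Ψ n a))
    have h1n : (0:ℝ) ≤ 1 / ((n:ℝ) + 1) := by positivity
    simp only [hΨdef, hE] at *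
    linarith [hu0 n, hv0 n]
  have hElim : Tendsto E atTop (𝓝 (0 : ℝ)) := by
    have l1 : Tendsto (fun n : ℕ => 1 / ((n : ℝ) + 1)) atTop (𝓝 0) :=
      tendsto_one_div_add_atTop_nhds_zero_nat
    have : Tendsto (fun n : ℕ => 2 * (u n + 1 / ((n:ℝ) + 1)) + 2 * (v n + 1 / ((n:ℝ) + 1)))
        atTop (𝓝 (2 * ((0:ℝ) + 0) + 2 * (0 + 0))) :=
      ((h1.add l1).const_mul 2).add ((h2.add l1).const_mul 2)
    simpa [hE] using this
  -- extract a cluster point of the sequence Ψ in the compact space Z' → Z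
  obtain ⟨ψ, hψ⟩ := exists_clusterPt_of_compactSpace (map Ψ atTop)
  have freq : ∀ s ∈ 𝓝 ψ, ∃ᶠ n in atTop, Ψ n ∈ s := mapClusterPt_iff_frequently.mp hψ
  have key : ∀ (a b : Z') (ε : ℝ), 0 < ε →
      ∃ n, dist (Ψ n a) (ψ a) < ε ∧ dist (Ψ n b) (ψ b) < ε ∧ E n ≤ ε := by
    intro a b ε hε
    have hVa : (fun g : Z' → Z => g a) ⁻¹' (ball (ψ a) ε) ∈ 𝓝 ψ :=
      (continuous_apply a).continuousAt.preimage_mem_nhds (ball_mem_nhds _ hε)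
    have hVb : (fun g : Z' → Z => g b) ⁻¹' (ball (ψ b) ε) ∈ 𝓝 ψ :=
      (continuous_apply b).continuousAt.preimage_mem_nhds (ball_mem_nhds _ hε)
    have hEev : ∀ᶠ n in atTop, E n ≤ ε := by
      have := (Metric.tendsto_nhds.mp hElim) ε hε
      filter_upwards [this] with n hn
      rw [Real.dist_0_eq_abs] at hn
      exact (le_abs_self _).trans hn.le
    obtain ⟨n, ⟨hna, hnb⟩, hnE⟩ :=
      ((freq _ (inter_mem hVa hVb)).and_eventually hEev).exists
    exact ⟨n, mem_ball.mp hna, mem_ball.mp hnb, hnE⟩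
  refine ⟨ψ, Isometry.of_dist_eq fun a b => ?_, ?_⟩
  · have habs : ∀ ε : ℝ, 0 < ε → |dist (ψ a) (ψ b) - dist a b| ≤ 3 * ε := by
      intro ε hε
      obtain ⟨n, hna, hnb, hnE⟩ := key a b ε hε
      have t1 : dist (dist (ψ a) (ψ b)) (dist (Ψ n a) (Ψ n b))
          ≤ dist (ψ a) (Ψ n a) + dist (ψ b) (Ψ n b) := dist_dist_dist_le _ _ _ _
      rw [Real.dist_eq] at t1
      have t2 := hΨd n a b
      have c1 : dist (ψ a) (Ψ n a) < ε := by rw [dist_comm]; exact hna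
      have c2 : dist (ψ b) (Ψ n b) < ε := by rw [dist_comm]; exact hnb
      have := abs_sub_le (dist (ψ a) (ψ b)) (dist (Ψ n a) (Ψ n b)) (dist a b)
      linarith
    have hzero : |dist (ψ a) (ψ b) - dist a b| = 0 := by
      by_contra hne
      have hpos : 0 < |dist (ψ a) (ψ b) - dist a b| :=
        lt_of_le_of_ne (abs_nonneg _) (Ne.symm hne)
      have := habs (|dist (ψ a) (ψ b) - dist a b| / 4) (by positivity)
      linarith
    have := abs_eq_zero.mp hzero
    linarith [sub_eq_zero.mp this]
  · funext a
    show F' a = F (ψ a)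
    have habs : ∀ ε : ℝ, 0 < ε → dist (F' a) (F (ψ a)) ≤ 2 * ε := by
      intro ε hε
      obtain ⟨δ, hδpos, hδ⟩ := Metric.continuous_iff.mp hF (ψ a) ε hε
      obtain ⟨n, hna, -, hnE⟩ := key a a (min ε δ) (lt_min hε hδpos)
      have h1' : dist (F (Ψ n a)) (F (ψ a)) < ε :=
        hδ _ (lt_of_lt_of_le hna (min_le_right _ _))
      have h2' : dist (F' a) (F (Ψ n a)) ≤ ε :=
        (hΨf n a).trans (hnE.trans (min_le_left _ _))
      have := dist_triangle (F' a) (F (Ψ n a)) (F (ψ a))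
      linarith
    have hzero : dist (F' a) (F (ψ a)) = 0 := by
      by_contra hne
      have hpos : 0 < dist (F' a) (F (ψ a)) :=
        lt_of_le_of_ne dist_nonneg (Ne.symm hne)
      have := habs (dist (F' a) (F (ψ a)) / 4) (by positivity)
      linarith
    exact dist_eq_zero.mp hzero
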